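/- arXiv:2403.16641 — 2 statements merged into one kernel-verified Lean document; each statement's English description precedes it below -/
import Mathlib

section
/- If w : ℝⁿ → ℝ is a smooth solution of Δw - (1/2)⟨y,∇w⟩ - w/(p-1) + |w|^{p-1}w = 0, then the function H := w/(p-1) + (1/2)⟨y,∇w⟩ satisfies L H = H, where L v = Δv - (1/2)⟨y,∇v⟩ - v/(p-1) + p|w|^{p-1}v. -/
open MeasureTheory Real

noncomputable def pd {n : ℕ} (f : EuclideanSpace ℝ (Fin n) → ℝ) (i : Fin n)
    (y : EuclideanSpace ℝ (Fin n)) : ℝ := fderiv ℝ f y (EuclideanSpace.single i 1)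

noncomputable def lap {n : ℕ} (f : EuclideanSpace ℝ (Fin n) → ℝ)
    (y : EuclideanSpace ℝ (Fin n)) : ℝ := ∑ i, pd (pd f i) i y

/-- y · ∇f -/
noncomputable def ygrad {n : ℕ} (f : EuclideanSpace ℝ (Fin n) → ℝ)
    (y : EuclideanSpace ℝ (Fin n)) : ℝ := ∑ i, y i * pd f i y

/-- ⟨∇f, ∇g⟩ -/
noncomputable def gdot {n : ℕ} (f g : EuclideanSpace ℝ (Fin n) → ℝ)
    (y : EuclideanSpace ℝ (Fin n)) : ℝ := ∑ i, pd f i y * pd g i y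

/-- Ornstein–Uhlenbeck operator -/
noncomputable def OU {n : ℕ} (f : EuclideanSpace ℝ (Fin n) → ℝ)
    (y : EuclideanSpace ℝ (Fin n)) : ℝ := lap f y - (1/2) * ygrad f y

/-- linearized operator at w -/
noncomputable def Lop {n : ℕ} (p : ℝ) (w v : EuclideanSpace ℝ (Fin n) → ℝ)
    (y : EuclideanSpace ℝ (Fin n)) : ℝ :=
  lap v y - (1/2) * ygrad v y - v y / (p-1) + p * |w y| ^ (p-1) * v y

/-- self-similar profile equation -/
def ProfileEq {n : ℕ} (p : ℝ) (w : EuclideanSpace ℝ (Fin n) → ℝ) : Prop :=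
  ∀ y, lap w y - (1/2) * ygrad w y - w y / (p-1) + |w y| ^ (p-1) * w y = 0

section aux
open Filter
variable {n : ℕ}
local notation "E" => EuclideanSpace ℝ (Fin n)

lemma contDiff_pd {f : E → ℝ} (hf : ContDiff ℝ (⊤ : ℕ∞) f) (i : Fin n) : ContDiff ℝ (⊤ : ℕ∞) (pd f i) := by
  have h1 : ContDiff ℝ (⊤ : ℕ∞) (fderiv ℝ f) := hf.fderiv_right (by simp)
  exact (ContinuousLinearMap.apply ℝ ℝ (EuclideanSpace.single i 1)).contDiff.comp h1

lemma contDiff_coord (i : Fin n) : ContDiff ℝ (⊤ : ℕ∞) (fun y : E => y i) :=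
  (EuclideanSpace.proj (𝕜 := ℝ) i).contDiff

lemma pd_coord (i j : Fin n) (y : E) :
    pd (fun y : E => y j) i y = if i = j then 1 else 0 := by
  have : (fun y : E => y j) = (EuclideanSpace.proj (𝕜 := ℝ) j : E →L[ℝ] ℝ) := rfl
  rw [pd, this, ContinuousLinearMap.fderiv]
  simp [EuclideanSpace.single_apply, eq_comm]

lemma pd_add {f g : E → ℝ} {y : E} (hf : DifferentiableAt ℝ f y) (hg : DifferentiableAt ℝ g y)
    (i : Fin n) : pd (fun z => f z + g z) i y = pd f i y + pd g i y := by
  rw [pd, fderiv_fun_add hf hg]; rfl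

lemma pd_sub {f g : E → ℝ} {y : E} (hf : DifferentiableAt ℝ f y) (hg : DifferentiableAt ℝ g y)
    (i : Fin n) : pd (fun z => f z - g z) i y = pd f i y - pd g i y := by
  rw [pd, fderiv_fun_sub hf hg]; rfl

lemma pd_const_mul {f : E → ℝ} {y : E} (hf : DifferentiableAt ℝ f y) (c : ℝ)
    (i : Fin n) : pd (fun z => c * f z) i y = c * pd f i y := by
  rw [pd, fderiv_const_mul hf c]; rfl

lemma pd_div_const {f : E → ℝ} {y : E} (hf : DifferentiableAt ℝ f y) (c : ℝ)
    (i : Fin n) : pd (fun z => f z / c) i y = pd f i y / c := by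
  simp only [div_eq_inv_mul]
  exact pd_const_mul hf c⁻¹ i

lemma pd_mul {f g : E → ℝ} {y : E} (hf : DifferentiableAt ℝ f y) (hg : DifferentiableAt ℝ g y)
    (i : Fin n) : pd (fun z => f z * g z) i y = pd f i y * g y + f y * pd g i y := by
  rw [pd, fderiv_fun_mul hf hg]
  simp [pd]; ring

lemma pd_sum {ι : Type*} {s : Finset ι} {f : ι → E → ℝ} {y : E}
    (hf : ∀ j ∈ s, DifferentiableAt ℝ (f j) y) (i : Fin n) :
    pd (fun z => ∑ j ∈ s, f j z) i y = ∑ j ∈ s, pd (f j) i y := by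
  rw [pd, fderiv_fun_sum hf]
  simp [pd]

lemma pd_comm {f : E → ℝ} (hf : ContDiff ℝ (⊤ : ℕ∞) f) (i j : Fin n) (y : E) :
    pd (pd f i) j y = pd (pd f j) i y := by
  have hsymm : IsSymmSndFDerivAt ℝ f y := hf.contDiffAt.isSymmSndFDerivAt (by rw [minSmoothness_of_isRCLikeNormedField]; exact WithTop.coe_le_coe.mpr (le_top : (2:ℕ∞) ≤ ⊤))
  have hdf : DifferentiableAt ℝ (fderiv ℝ f) y :=
    ((hf.fderiv_right (m := (⊤ : ℕ∞)) (by simp)).differentiable (by simp)) y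
  have key : ∀ v : E, fderiv ℝ (fun z => fderiv ℝ f z v) y
      = (fderiv ℝ (fderiv ℝ f) y).flip v := by
    intro v
    have h := fderiv_clm_apply (c := fderiv ℝ f) (u := fun _ => v) hdf (differentiableAt_const v)
    simpa using h
  show fderiv ℝ (fun z => fderiv ℝ f z (EuclideanSpace.single i 1)) y (EuclideanSpace.single j 1)
      = fderiv ℝ (fun z => fderiv ℝ f z (EuclideanSpace.single j 1)) y (EuclideanSpace.single i 1)
  rw [key, key]
  exact hsymm _ _

lemma hasDerivAt_absrpow (p : ℝ) (hp : 1 < p) (t : ℝ) :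
    HasDerivAt (fun s : ℝ => |s| ^ (p-1) * s) (p * |t| ^ (p-1)) t := by
  rcases lt_trichotomy t 0 with ht | ht | ht
  · have h1 : HasDerivAt (fun s : ℝ => -s) (-1) t := (hasDerivAt_id t).neg
    have h2 : HasDerivAt (fun s : ℝ => (-s) ^ p) (p * (-t) ^ (p-1) * (-1)) t :=
      (Real.hasDerivAt_rpow_const (x := -t) (Or.inl (by linarith))).comp t h1
    have h3 : HasDerivAt (fun s : ℝ => -((-s) ^ p)) (p * (-t) ^ (p-1)) t := by
      have h4 := h2.neg
      simp only [mul_neg, mul_one, neg_neg] at h4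
      exact h4
    have heq : (fun s : ℝ => |s| ^ (p-1) * s) =ᶠ[nhds t] (fun s : ℝ => -((-s) ^ p)) := by
      filter_upwards [Iio_mem_nhds ht] with s hs
      have hs' : (0:ℝ) < -s := by simpa using hs
      have habs : |s| = -s := abs_of_neg hs
      rw [habs]
      have : (-s) ^ p = (-s) ^ (p-1) * (-s) := by
        rw [← Real.rpow_add_one (by positivity) (p-1)]; ring_nf
      rw [this]; ring
    have := h3.congr_of_eventuallyEq heq
    simpa [abs_of_neg ht] using this
  · subst ht
    rw [hasDerivAt_iff_tendsto_slope]
    have h0 : p * |(0:ℝ)| ^ (p-1) = 0 := by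
      simp [Real.zero_rpow (by linarith : p - 1 ≠ 0)]
    rw [h0]
    have hcong : ∀ s ∈ ({(0:ℝ)}ᶜ : Set ℝ), |s| ^ (p-1) = slope (fun s : ℝ => |s| ^ (p-1) * s) 0 s := by
      intro s hs
      have hs0 : s ≠ 0 := hs
      simp [slope_def_field, Real.zero_rpow (by linarith : p-1 ≠ 0)]
      field_simp
    have hc : ContinuousAt (fun s : ℝ => |s| ^ (p-1)) 0 :=
      continuous_abs.continuousAt.rpow_const (Or.inr (by linarith))
    have h2 : Filter.Tendsto (fun s : ℝ => |s| ^ (p-1)) (nhdsWithin 0 {(0:ℝ)}ᶜ)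
        (nhds (|(0:ℝ)| ^ (p-1))) := hc.continuousWithinAt
    have h2' : Filter.Tendsto (fun s : ℝ => |s| ^ (p-1)) (nhdsWithin 0 {(0:ℝ)}ᶜ) (nhds 0) := by
      simpa [Real.zero_rpow (by linarith : p-1 ≠ 0)] using h2
    exact Tendsto.congr' (eventually_nhdsWithin_of_forall hcong) h2'
  · have h2 : HasDerivAt (fun s : ℝ => s ^ p) (p * t ^ (p-1)) t :=
      Real.hasDerivAt_rpow_const (x := t) (Or.inl (by linarith))
    have heq : (fun s : ℝ => |s| ^ (p-1) * s) =ᶠ[nhds t] (fun s : ℝ => s ^ p) := by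
      filter_upwards [Ioi_mem_nhds ht] with s hs
      have hs' : (0:ℝ) < s := hs
      rw [abs_of_pos hs', ← Real.rpow_add_one (ne_of_gt hs') (p-1)]
      ring_nf
    have := h2.congr_of_eventuallyEq heq
    simpa [abs_of_pos ht] using this

lemma pd_absrpow {p : ℝ} (hp : 1 < p) {w : E → ℝ} (hw : Differentiable ℝ w) (i : Fin n) (y : E) :
    pd (fun z => |w z| ^ (p-1) * w z) i y = p * |w y| ^ (p-1) * pd w i y := by
  have h : HasFDerivAt (fun z => |w z| ^ (p-1) * w z)
      ((p * |w y| ^ (p-1)) • fderiv ℝ w y) y :=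
    (hasDerivAt_absrpow p hp (w y)).comp_hasFDerivAt y (hw y).hasFDerivAt
  rw [pd, h.fderiv]
  simp [pd]

lemma diff_absrpow {p : ℝ} (hp : 1 < p) {w : E → ℝ} (hw : Differentiable ℝ w) (y : E) :
    DifferentiableAt ℝ (fun z => |w z| ^ (p-1) * w z) y :=
  ((hasDerivAt_absrpow p hp (w y)).comp_hasFDerivAt y (hw y).hasFDerivAt).differentiableAt

lemma pd_ysum {v : Fin n → E → ℝ} (hv : ∀ i, ContDiff ℝ (⊤ : ℕ∞) (v i)) (j : Fin n) (y : E) :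
    pd (fun z => ∑ i, z i * v i z) j y = v j y + ∑ i, y i * pd (v i) j y := by
  rw [pd_sum (fun i _ => (show DifferentiableAt ℝ (fun z : E => z i * v i z) y from
      ((contDiff_coord i).differentiable (by simp) y).mul
      ((hv i).differentiable (by simp) y))) j]
  have h : ∀ i, pd (fun z => z i * v i z) j y
      = (if j = i then 1 else 0) * v i y + y i * pd (v i) j y := fun i => by
    rw [pd_mul ((contDiff_coord i).differentiable (by simp) y) ((hv i).differentiable (by simp) y),
      pd_coord]
  rw [Finset.sum_congr rfl (fun i _ => h i), Finset.sum_add_distrib]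
  simp [ite_mul, Finset.sum_ite_eq]

lemma diffAt_div_const {f : E → ℝ} {y : E} (hf : DifferentiableAt ℝ f y) (c : ℝ) :
    DifferentiableAt ℝ (fun z => f z / c) y := by
  simp only [div_eq_inv_mul]
  exact hf.const_mul _

lemma contDiff_ysum {v : Fin n → E → ℝ} (hv : ∀ i, ContDiff ℝ (⊤ : ℕ∞) (v i)) :
    ContDiff ℝ (⊤ : ℕ∞) (fun z : E => ∑ i, z i * v i z) :=
  ContDiff.sum fun i _ => (contDiff_coord i).mul (hv i)

end aux

theorem stmt_1 {n : ℕ} (p : ℝ) (hp : 1 < p) (w : EuclideanSpace ℝ (Fin n) → ℝ)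
    (hw : ContDiff ℝ (⊤ : ℕ∞) w) (heq : ProfileEq p w)
    (H : EuclideanSpace ℝ (Fin n) → ℝ)
    (hH : ∀ y, H y = w y / (p-1) + (1/2) * ygrad w y) :
    ∀ y, Lop p w H y = H y := by
  intro y
  have hp0 : p - 1 ≠ 0 := by linarith
  have hdw : Differentiable ℝ w := hw.differentiable (by simp)
  have hu : ∀ i, ContDiff ℝ (⊤ : ℕ∞) (pd w i) := contDiff_pd hw
  have huu : ∀ i j, ContDiff ℝ (⊤ : ℕ∞) (pd (pd w i) j) := fun i j => contDiff_pd (hu i) j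
  have hAdiff : Differentiable ℝ (ygrad w) := (contDiff_ysum hu).differentiable (by simp)
  -- derivative of ygrad w
  have hA : ∀ (j : Fin n) (z : EuclideanSpace ℝ (Fin n)),
      pd (ygrad w) j z = pd w j z + ∑ i, z i * pd (pd w i) j z :=
    fun j z => pd_ysum hu j z
  -- first derivatives of H
  have hHfun : H = fun z => w z / (p-1) + (1/2) * ygrad w z := funext hH
  have hpdH : ∀ (j : Fin n) (z : EuclideanSpace ℝ (Fin n)), pd H j z
      = pd w j z / (p-1) + (1/2) * (pd w j z + ∑ i, z i * pd (pd w i) j z) := by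
    intro j z
    rw [hHfun, pd_add (diffAt_div_const (hdw z) _) ((hAdiff z).const_mul _) j,
      pd_div_const (hdw z), pd_const_mul (hAdiff z), hA]
  -- second derivatives of H (only diagonal needed)
  have hBdiff : ∀ j : Fin n, Differentiable ℝ
      (fun z : EuclideanSpace ℝ (Fin n) => ∑ i, z i * pd (pd w i) j z) :=
    fun j => (contDiff_ysum (fun i => huu i j)).differentiable (by simp)
  have hpd2H : ∀ j : Fin n, pd (pd H j) j y
      = pd (pd w j) j y / (p-1) + (1/2) * (pd (pd w j) j y
          + (pd (pd w j) j y + ∑ i, y i * pd (pd (pd w i) j) j y)) := by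
    intro j
    have hfun : pd H j = fun z => pd w j z / (p-1)
        + (1/2) * (pd w j z + ∑ i, z i * pd (pd w i) j z) := funext (hpdH j)
    have hdj : DifferentiableAt ℝ (pd w j) y := (hu j).differentiable (by simp) y
    rw [hfun, pd_add (diffAt_div_const hdj _) ((show DifferentiableAt ℝ (fun z => pd w j z + ∑ i, z i * pd (pd w i) j z) y from hdj.add (hBdiff j y)).const_mul _) j,
      pd_div_const hdj, pd_const_mul (show DifferentiableAt ℝ (fun z => pd w j z + ∑ i, z i * pd (pd w i) j z) y from hdj.add (hBdiff j y)),
      pd_add hdj (hBdiff j y), pd_ysum (fun i => huu i j)]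
  -- third derivative identity
  have hthird : ∀ (i : Fin n) (z : EuclideanSpace ℝ (Fin n)),
      ∑ j, pd (pd (pd w i) j) j z = pd (lap w) i z := by
    intro i z
    have h1 : pd (lap w) i z = ∑ j, pd (pd (pd w j) j) i z :=
      pd_sum (fun j _ => (huu j j).differentiable (by simp) z) i
    rw [h1]
    refine Finset.sum_congr rfl (fun j _ => ?_)
    rw [pd_comm (hu j) j i z]
    have h2 : pd (pd w j) i = pd (pd w i) j := funext fun z => pd_comm hw j i z
    rw [h2]
  -- derivative of lap w via the equation
  have heqfun : lap w = fun z => (1/2) * ygrad w z + w z / (p-1) - |w z| ^ (p-1) * w z := by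
    funext z
    have := heq z
    linarith
  have hpdlap : ∀ i : Fin n, pd (lap w) i y
      = (1/2) * (pd w i y + ∑ j, y j * pd (pd w j) i y)
        + pd w i y / (p-1) - p * |w y| ^ (p-1) * pd w i y := by
    intro i
    rw [heqfun,
      pd_sub (show DifferentiableAt ℝ (fun z => (1/2) * ygrad w z + w z / (p-1)) y from ((hAdiff y).const_mul _).add (diffAt_div_const (hdw y) _)) (diff_absrpow hp hdw y) i,
      pd_add ((hAdiff y).const_mul _) (diffAt_div_const (hdw y) _) i,
      pd_const_mul (hAdiff y), pd_div_const (hdw y), pd_absrpow hp hdw, hA]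
  -- lap H
  have hT : ∑ j, ∑ i, y i * pd (pd (pd w i) j) j y = ∑ i, y i * pd (lap w) i y := by
    rw [Finset.sum_comm]
    exact Finset.sum_congr rfl fun i _ => by rw [← Finset.mul_sum, hthird i y]
  have hlapH : lap H y = lap w y / (p-1)
      + (1/2) * (2 * lap w y + ∑ i, y i * pd (lap w) i y) := by
    have h1 : lap H y = ∑ j, (pd (pd w j) j y / (p-1) + (1/2) * (pd (pd w j) j y
        + (pd (pd w j) j y + ∑ i, y i * pd (pd (pd w i) j) j y))) := by
      unfold lap
      exact Finset.sum_congr rfl (fun j _ => hpd2H j)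
    rw [h1, Finset.sum_add_distrib, ← Finset.sum_div, ← Finset.mul_sum,
      Finset.sum_add_distrib, Finset.sum_add_distrib, hT]
    unfold lap
    ring
  -- ygrad H
  have hygradH : ygrad H y = ygrad w y / (p-1)
      + (1/2) * (ygrad w y + ∑ j, y j * ∑ i, y i * pd (pd w i) j y) := by
    have h1 : ∀ j : Fin n, y j * pd H j y = y j * pd w j y / (p-1)
        + (1/2) * (y j * pd w j y + y j * ∑ i, y i * pd (pd w i) j y) := fun j => by
      rw [hpdH j y]; ring
    show (∑ j, y j * pd H j y) = _
    rw [Finset.sum_congr rfl (fun j _ => h1 j), Finset.sum_add_distrib, ← Finset.sum_div,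
      ← Finset.mul_sum, Finset.sum_add_distrib]
    rfl
  -- ygrad of lap w
  have hyglap : ∑ i, y i * pd (lap w) i y
      = (1/2) * (ygrad w y + ∑ i, y i * ∑ j, y j * pd (pd w j) i y)
        + ygrad w y / (p-1) - p * |w y| ^ (p-1) * ygrad w y := by
    have h1 : ∀ i : Fin n, y i * pd (lap w) i y
        = (1/2) * (y i * pd w i y + y i * ∑ j, y j * pd (pd w j) i y)
          + y i * pd w i y / (p-1) - p * |w y| ^ (p-1) * (y i * pd w i y) := fun i => by
      rw [hpdlap i]; ring
    rw [Finset.sum_congr rfl (fun i _ => h1 i), Finset.sum_sub_distrib, Finset.sum_add_distrib,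
      ← Finset.mul_sum, ← Finset.sum_div, ← Finset.mul_sum, Finset.sum_add_distrib]
    unfold ygrad
    ring
  -- final assembly
  have hL0 : lap w y = (1/2) * ygrad w y + w y / (p-1) - |w y| ^ (p-1) * w y := by
    have := heq y
    linarith
  unfold Lop
  rw [hlapH, hyglap, hygradH, hH y, hL0]
  field_simp
  ring
end

section
/- Let w be a smooth bounded solution of Δw - (1/2)⟨y,∇w⟩ - w/(p-1) + |w|^{p-1}w = 0 on ℝⁿ with H := w/(p-1) + (1/2)⟨y,∇w⟩ ≥ 0 and w ≥ 0. Suppose H ≡ 0 on ℝⁿ. Then w ≡ 0. -/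
open MeasureTheory Real

theorem stmt_16 {n : ℕ} (p : ℝ) (hp : 1 < p) (w : EuclideanSpace ℝ (Fin n) → ℝ)
    (hw : ContDiff ℝ (⊤ : ℕ∞) w) (heq : ProfileEq p w)
    (hbdd : ∃ C : ℝ, ∀ y, |w y| ≤ C)
    (hwnn : ∀ y, 0 ≤ w y)
    (hHnn : ∀ y, 0 ≤ w y / (p-1) + (1/2) * ygrad w y)
    (hH0 : ∀ y, w y / (p-1) + (1/2) * ygrad w y = 0) :
    ∀ y, w y = 0 := by
  obtain ⟨C, hC⟩ := hbdd
  intro y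
  set c : ℝ := 2 / (p - 1) with hc
  have hp1 : (0:ℝ) < p - 1 := by linarith
  have hcpos : 0 < c := by positivity
  set g : ℝ → ℝ := fun t => w (t • y) with hg
  -- expansion of vectors in the standard basis
  have hexp : ∀ (z : EuclideanSpace ℝ (Fin n)),
      z = ∑ i, z i • EuclideanSpace.single i (1:ℝ) := by
    intro z
    ext j
    rw [WithLp.ofLp_sum, Finset.sum_apply]
    simp [EuclideanSpace.single_apply, PiLp.smul_apply, smul_eq_mul, mul_ite,
      Finset.sum_ite_eq']
  have hlin : ∀ (x : EuclideanSpace ℝ (Fin n)),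
      fderiv ℝ w x y = ∑ i, y i * pd w i x := by
    intro x
    conv_lhs => rw [hexp y]
    rw [map_sum]
    simp [pd, smul_eq_mul]
  -- derivative of g
  have hdg : ∀ t : ℝ, HasDerivAt g (fderiv ℝ w (t • y) y) t := by
    intro t
    have h1 : HasDerivAt (fun t : ℝ => t • y) y t := by
      simpa using (hasDerivAt_id t).smul_const y
    exact ((hw.differentiable (by simp) (t • y)).hasFDerivAt).comp_hasDerivAt t h1
  -- main ODE relation: t * g'(t) = -c * (p-1) ... i.e. t * g' = -2/(p-1) * g t * ... compute
  have hode : ∀ t : ℝ, t * fderiv ℝ w (t • y) y = -(c * g t) := by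
    intro t
    have h := hH0 (t • y)
    have hyg : ygrad w (t • y) = t * fderiv ℝ w (t • y) y := by
      rw [hlin, ygrad, Finset.mul_sum]
      apply Finset.sum_congr rfl
      intro i _
      have : (t • y) i = t * y i := rfl
      rw [this]; ring
    rw [hyg] at h
    have : g t = w (t • y) := rfl
    rw [← this] at h
    field_simp at h
    rw [hc]
    field_simp
    linarith
  -- F t = t^c * g t has zero derivative on (0, ∞)
  have hF : ∀ t : ℝ, 0 < t → HasDerivAt (fun s : ℝ => s ^ c * g s) 0 t := by
    intro t ht
    have h1 : HasDerivAt (fun s : ℝ => s ^ c) (c * t ^ (c - 1)) t :=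
      Real.hasDerivAt_rpow_const (Or.inl ht.ne')
    have h2 := (h1.mul (hdg t))
    refine h2.congr_deriv ?_
    have ht1 : t ^ c = t ^ (c - 1) * t := by
      rw [show c = (c-1)+1 by ring, Real.rpow_add_one ht.ne']
      ring_nf
    rw [ht1]
    linear_combination (t ^ (c-1)) * hode t
  -- F constant on (0,1]
  have hcons : ∀ t : ℝ, 0 < t → t ≤ 1 → w y = t ^ c * g t := by
    intro t ht ht1
    have key : ∀ x ∈ Set.Icc t 1, (fun s : ℝ => s ^ c * g s) x = t ^ c * g t := by
      apply constant_of_has_deriv_right_zero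
      · intro x hx
        exact ((hF x (lt_of_lt_of_le ht hx.1)).continuousAt).continuousWithinAt
      · intro x hx
        exact ((hF x (lt_of_lt_of_le ht hx.1)).hasDerivWithinAt)
    have h1 := key 1 ⟨ht1, le_refl 1⟩
    simp only [Real.one_rpow, one_mul] at h1
    have : g 1 = w y := by simp [hg]
    rw [← this, h1]
  -- take t → 0⁺
  have hbd : ∀ t : ℝ, 0 < t → t ≤ 1 → |w y| ≤ t ^ c * C := by
    intro t ht ht1
    rw [hcons t ht ht1, abs_mul, abs_of_nonneg (Real.rpow_nonneg ht.le c)]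
    exact mul_le_mul_of_nonneg_left (hC _) (Real.rpow_nonneg ht.le c)
  have htend : Filter.Tendsto (fun t : ℝ => t ^ c * C) (nhdsWithin 0 (Set.Ioi 0)) (nhds 0) := by
    have h0 : Filter.Tendsto (fun t : ℝ => t ^ c) (nhdsWithin 0 (Set.Ioi 0)) (nhds 0) := by
      have := (Real.continuousAt_rpow_const 0 c (Or.inr hcpos.le)).continuousWithinAt
        (s := Set.Ioi 0)
      simpa [Real.zero_rpow hcpos.ne'] using this.tendsto
    simpa using h0.mul_const C
  have hev : ∀ᶠ t in nhdsWithin (0:ℝ) (Set.Ioi 0), |w y| ≤ t ^ c * C := by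
    filter_upwards [Ioo_mem_nhdsGT one_pos] with t ht
    exact hbd t ht.1 ht.2.le
  have : |w y| ≤ 0 :=
    ge_of_tendsto htend hev
  have := abs_nonneg (w y)
  have : |w y| = 0 := le_antisymm ‹|w y| ≤ 0› (abs_nonneg _)
  exact abs_eq_zero.mp this
end
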